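/- arXiv:1809.09042 — 4 statements merged into one kernel-verified Lean document; each statement's English description precedes it below -/
import Mathlib

section
/- If sup_{x∈K} V(x) ≤ τ almost surely and T_τ < ∞ almost surely, then the threshold-stopped approximation is exact: almost surely Z^{(T_τ)}(x) = Z(x) for all x ∈ K. -/
open MeasureTheory ProbabilityTheory Filter
open scoped ENNReal

noncomputable section

namespace MaxStableSim

variable {Ω : Type*} [MeasurableSpace Ω]
variable {K : Type*} [MetricSpace K] [CompactSpace K] [Nonempty K]

/-- Arrival times of the unit rate Poisson process: `Γ n = E 0 + ⋯ + E (n-1)`,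
so that `Γ (j+1)` is the `(j+1)`-st arrival time. -/
def arrivals (E : ℕ → Ω → ℝ) (n : ℕ) (ω : Ω) : ℝ :=
  ∑ j ∈ Finset.range n, E j ω

/-- The `j`-th function `Γ_{j+1}⁻¹ V_j(x)` of the Poisson point process, valued in `[0,∞]`. -/
def fn (E : ℕ → Ω → ℝ) (Vs : ℕ → Ω → C(K, ℝ)) (j : ℕ) (ω : Ω) (x : K) : ℝ≥0∞ :=
  ENNReal.ofReal ((arrivals E (j + 1) ω)⁻¹ * Vs j ω x)

/-- The simple max-stable process `Z(x) = sup_{j ∈ ℕ} Γ_j⁻¹ V_j(x)`. -/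
def Z (E : ℕ → Ω → ℝ) (Vs : ℕ → Ω → C(K, ℝ)) (ω : Ω) (x : K) : ℝ≥0∞ :=
  ⨆ j : ℕ, fn E Vs j ω x

/-- The partial maxima `Z^{(m)}(x) = max_{1 ≤ j ≤ m} Γ_j⁻¹ V_j(x)` (zero for `m = 0`). -/
def Zpart (E : ℕ → Ω → ℝ) (Vs : ℕ → Ω → C(K, ℝ)) (m : ℕ) (ω : Ω) (x : K) : ℝ≥0∞ :=
  ⨆ j ∈ Finset.range m, fn E Vs j ω x

/-- The set of indices `m` at which the threshold stopping criterion
`Γ_{m+1}⁻¹ τ < inf_{x ∈ K} Z^{(m)}(x)` holds. -/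
def stopSet (E : ℕ → Ω → ℝ) (Vs : ℕ → Ω → C(K, ℝ)) (τ : ℝ) (ω : Ω) : Set ℕ :=
  {m : ℕ | ENNReal.ofReal (τ * (arrivals E (m + 1) ω)⁻¹) < ⨅ x, Zpart E Vs m ω x}

/-- The threshold stopping time `T_τ`, valued in `[0,∞]` (equal to `∞` if the
stopping criterion never holds). -/
def T (E : ℕ → Ω → ℝ) (Vs : ℕ → Ω → C(K, ℝ)) (τ : ℝ) (ω : Ω) : ℝ≥0∞ :=
  ⨅ m ∈ stopSet E Vs τ ω, (m : ℝ≥0∞)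

/-- The threshold stopping time as a natural number (junk value `sInf ∅ = 0`
if the stopping criterion never holds). -/
def Tnat (E : ℕ → Ω → ℝ) (Vs : ℕ → Ω → C(K, ℝ)) (τ : ℝ) (ω : Ω) : ℕ :=
  sInf (stopSet E Vs τ ω)

/-- The threshold-stopped process `Z^{(T_τ)}`. -/
def Zstop (E : ℕ → Ω → ℝ) (Vs : ℕ → Ω → C(K, ℝ)) (τ : ℝ) (ω : Ω) (x : K) : ℝ≥0∞ :=
  Zpart E Vs (Tnat E Vs τ ω) ω x

/-!
Once the stopping criterion holds at `m`, every later term is small: for `j ≥ m`,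
`Γ_{j+1}⁻¹ V_j(x) ≤ Γ_{m+1}⁻¹ τ < inf Z^{(m)} ≤ Z^{(m)}(x)`, because the arrival times increase
and `V_j ≤ τ`. Hence the terms with index `≥ m` never change the supremum and `Z^{(m)} = Z`.
Positivity of the exponential variables, needed for the monotonicity of `Γ⁻¹`, and the bound
`V_j ≤ τ` hold almost surely, the latter because the `V_j` are copies of `V`.
-/

lemma expMeasure_Iic_zero (r : ℝ) : expMeasure r (Set.Iic 0) = 0 := by
  rw [expMeasure, gammaMeasure, withDensity_apply _ measurableSet_Iic,
    setLIntegral_congr Iio_ae_eq_Iic.symm]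
  exact lintegral_gammaPDF_of_nonpos le_rfl

lemma ae_pos_of_map_eq_expMeasure {μ : Measure Ω} {f : Ω → ℝ} {r : ℝ} (hr : 0 < r)
    (hf : μ.map f = expMeasure r) : ∀ᵐ ω ∂μ, 0 < f ω := by
  have : IsProbabilityMeasure (expMeasure r) := isProbabilityMeasure_expMeasure hr
  have hf_meas : AEMeasurable f μ := .of_map_ne_zero (hf ▸ IsProbabilityMeasure.ne_zero _)
  refine (ae_map_iff hf_meas measurableSet_Ioi).1 ?_
  rw [hf, ae_iff]
  simp only [not_lt]
  exact expMeasure_Iic_zero r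

lemma isClosed_setOf_forall_apply_le {X : Type*} [TopologicalSpace X] (c : ℝ) :
    IsClosed {f : C(X, ℝ) | ∀ x, f x ≤ c} := by
  simp only [Set.ofPred_forall]
  exact isClosed_iInter fun x => isClosed_le (continuous_eval_const x) continuous_const

section Deterministic

omit [MeasurableSpace Ω] [CompactSpace K] [Nonempty K]

variable {E : ℕ → Ω → ℝ} {Vs : ℕ → Ω → C(K, ℝ)} {τ : ℝ} {ω : Ω}

lemma arrivals_succ_pos (hE : ∀ j, 0 < E j ω) (n : ℕ) : 0 < arrivals E (n + 1) ω :=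
  Finset.sum_pos (fun j _ => hE j) Finset.nonempty_range_add_one

lemma arrivals_mono (hE : ∀ j, 0 ≤ E j ω) : Monotone fun n => arrivals E n ω :=
  fun _ _ hab => Finset.sum_le_sum_of_subset_of_nonneg (Finset.range_subset_range.2 hab)
    fun j _ _ => hE j

lemma fn_le_mul_inv_arrivals_of_le (hE : ∀ j, 0 < E j ω) {j m : ℕ} (hmj : m ≤ j)
    (hV : ∀ x, Vs j ω x ≤ τ) (hVnn : ∀ x, 0 ≤ Vs j ω x) (x : K) :
    fn E Vs j ω x ≤ ENNReal.ofReal (τ * (arrivals E (m + 1) ω)⁻¹) := by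
  have hinv : (arrivals E (j + 1) ω)⁻¹ ≤ (arrivals E (m + 1) ω)⁻¹ :=
    inv_anti₀ (arrivals_succ_pos hE m) (arrivals_mono (fun i => (hE i).le) (by omega))
  refine ENNReal.ofReal_le_ofReal ?_
  rw [mul_comm τ]
  exact mul_le_mul hinv (hV x) (hVnn x) (inv_nonneg.2 (arrivals_succ_pos hE m).le)

lemma Zpart_le_Z (m : ℕ) (x : K) : Zpart E Vs m ω x ≤ Z E Vs ω x :=
  iSup₂_le fun j _ => le_iSup (fun j => fn E Vs j ω x) j

lemma Zpart_eq_Z_of_mem_stopSet (hE : ∀ j, 0 < E j ω) (hV : ∀ j x, Vs j ω x ≤ τ)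
    (hVnn : ∀ j x, 0 ≤ Vs j ω x) {m : ℕ} (hm : m ∈ stopSet E Vs τ ω) (x : K) :
    Zpart E Vs m ω x = Z E Vs ω x := by
  refine le_antisymm (Zpart_le_Z m x) (iSup_le fun j => ?_)
  rcases lt_or_ge j m with hjm | hmj
  · exact le_iSup₂ (f := fun j (_ : j ∈ Finset.range m) => fn E Vs j ω x) j
      (Finset.mem_range.2 hjm)
  · calc fn E Vs j ω x ≤ ENNReal.ofReal (τ * (arrivals E (m + 1) ω)⁻¹) :=
          fn_le_mul_inv_arrivals_of_le hE hmj (hV j) (hVnn j) x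
      _ ≤ ⨅ y, Zpart E Vs m ω y := hm.le
      _ ≤ Zpart E Vs m ω x := iInf_le _ x

lemma Zstop_eq_Z (hE : ∀ j, 0 < E j ω) (hV : ∀ j x, Vs j ω x ≤ τ)
    (hVnn : ∀ j x, 0 ≤ Vs j ω x) (hT : (stopSet E Vs τ ω).Nonempty) (x : K) :
    Zstop E Vs τ ω x = Z E Vs ω x :=
  Zpart_eq_Z_of_mem_stopSet hE hV hVnn (Nat.sInf_mem hT) x

end Deterministic

theorem threshold_stopping_exact_of_bounded_general
    (μ : Measure Ω)
    [MeasurableSpace C(K, ℝ)] [BorelSpace C(K, ℝ)]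
    (E : ℕ → Ω → ℝ)
    (hEexp : ∀ j, Measure.map (E j) μ = expMeasure 1)
    (V0 : Ω → C(K, ℝ))
    (Vs : ℕ → Ω → C(K, ℝ))
    (hVcopies : ∀ j, IdentDistrib (Vs j) V0 μ μ)
    (hVnn : ∀ j ω x, 0 ≤ Vs j ω x)
    (τ : ℝ)
    (hVbound : ∀ᵐ ω ∂μ, ∀ x, V0 ω x ≤ τ)
    (hTfin : ∀ᵐ ω ∂μ, (stopSet E Vs τ ω).Nonempty) :
    ∀ᵐ ω ∂μ, ∀ x, Zstop E Vs τ ω x = Z E Vs ω x := by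
  have hEpos : ∀ᵐ ω ∂μ, ∀ j, 0 < E j ω :=
    ae_all_iff.2 fun j => ae_pos_of_map_eq_expMeasure one_pos (hEexp j)
  have hVsbound : ∀ᵐ ω ∂μ, ∀ j x, Vs j ω x ≤ τ :=
    ae_all_iff.2 fun j =>
      (hVcopies j).symm.ae_snd (isClosed_setOf_forall_apply_le τ).measurableSet hVbound
  filter_upwards [hEpos, hVsbound, hTfin] with ω hE hV hT
  exact Zstop_eq_Z hE hV (hVnn · ω) hT

/-- If `sup_{x ∈ K} V(x) ≤ τ` almost surely and `T_τ < ∞` almost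
surely, then the threshold-stopped approximation is exact: almost surely
`Z^{(T_τ)}(x) = Z(x)` for all `x ∈ K`. -/
theorem threshold_stopping_exact_of_bounded
    (μ : Measure Ω) [IsProbabilityMeasure μ]
    [MeasurableSpace C(K, ℝ)] [BorelSpace C(K, ℝ)]
    (E : ℕ → Ω → ℝ) (hEmeas : ∀ j, Measurable (E j))
    (hEindep : iIndepFun E μ)
    (hEexp : ∀ j, Measure.map (E j) μ = expMeasure 1)
    (V0 : Ω → C(K, ℝ)) (hV0meas : Measurable V0)
    (hV0nn : ∀ ω x, 0 ≤ V0 ω x)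
    (hV0mean : ∀ x, ∫⁻ ω, ENNReal.ofReal (V0 ω x) ∂μ = 1)
    (Vs : ℕ → Ω → C(K, ℝ)) (hVmeas : ∀ j, Measurable (Vs j))
    (hVindep : iIndepFun Vs μ)
    (hVcopies : ∀ j, IdentDistrib (Vs j) V0 μ μ)
    (hVnn : ∀ j ω x, 0 ≤ Vs j ω x)
    (hEV : IndepFun (fun ω j => E j ω) (fun ω j => Vs j ω) μ)
    (hZfin : ∀ᵐ ω ∂μ, ∀ x, Z E Vs ω x < ⊤)
    (hZcont : ∀ᵐ ω ∂μ, Continuous fun x => Z E Vs ω x)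
    (τ : ℝ) (hτ : 0 < τ)
    (hVbound : ∀ᵐ ω ∂μ, ∀ x, V0 ω x ≤ τ)
    (hTfin : ∀ᵐ ω ∂μ, (stopSet E Vs τ ω).Nonempty) :
    ∀ᵐ ω ∂μ, ∀ x, Zstop E Vs τ ω x = Z E Vs ω x :=
  threshold_stopping_exact_of_bounded_general μ E hEexp V0 Vs hVcopies hVnn τ hVbound hTfin

end MaxStableSim
end
end

section
/- Assume min_{1≤i≤N} V(x_i) > 0 almost surely, and that N_X and N_Γ are almost surely finite. Then almost surely, for every n > max{N_X, N_Γ, N_a} and every i ∈ {1,…,N}, one has Γ_n^{-1} V_n(x_i) < Γ_1^{-1} min_{1≤i'≤N} V_1(x_{i'}); consequently, with M = max{N_X, N_Γ, N_a, 1}, almost surely Z^{(M)}(x_i) = Z(x_i) for all i ∈ {1,…,N}, i.e. the record-breakers truncation reproduces the max-stable process exactly on {x_1,…,x_N}. -/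
/-!
Only two almost sure facts are probabilistic: `Γ₁ > 0` (exponential law of `E₁`) and
`min_i V₁(xᵢ) > 0` (transported from `V` to its copy `V₁`). The rest is deterministic. For
`n > max{N_X, N_Γ, N_a}` we have `Vₙ(xᵢ) ≤ n^a e^C` and `Γₙ > c n`, so
`Γₙ⁻¹ Vₙ(xᵢ) < n^(a-1) e^C / c`, and `n > N_a` makes this smaller than `Γ₁⁻¹ min_i V₁(xᵢ)`.
So no term of index above `M` exceeds the first one, and the supremum defining `Z` is
already attained among the first `M` terms.
-/

open MeasureTheory ProbabilityTheory Filter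
open scoped ENNReal

noncomputable section

namespace MaxStableSimFin

variable {Ω : Type*} [MeasurableSpace Ω] {N : ℕ}

/-- Arrival times of the unit rate Poisson process: `Γ n = E 0 + ⋯ + E (n-1)`,
so that `Γ (j+1)` is the `(j+1)`-st arrival time. -/
def arrivals (E : ℕ → Ω → ℝ) (n : ℕ) (ω : Ω) : ℝ :=
  ∑ j ∈ Finset.range n, E j ω

/-- The `j`-th function `Γ_{j+1}⁻¹ V_j(x_k)` of the Poisson point process, valued in `[0,∞]`. -/
def fn (E : ℕ → Ω → ℝ) (Vs : ℕ → Ω → Fin N → ℝ) (j : ℕ) (ω : Ω) (k : Fin N) : ℝ≥0∞ :=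
  ENNReal.ofReal ((arrivals E (j + 1) ω)⁻¹ * Vs j ω k)

/-- The simple max-stable process `Z(x_k) = sup_{j ∈ ℕ} Γ_j⁻¹ V_j(x_k)`. -/
def Z (E : ℕ → Ω → ℝ) (Vs : ℕ → Ω → Fin N → ℝ) (ω : Ω) (k : Fin N) : ℝ≥0∞ :=
  ⨆ j : ℕ, fn E Vs j ω k

/-- The partial maxima `Z^{(m)}(x_k) = max_{1 ≤ j ≤ m} Γ_j⁻¹ V_j(x_k)` (zero for `m = 0`). -/
def Zpart (E : ℕ → Ω → ℝ) (Vs : ℕ → Ω → Fin N → ℝ) (m : ℕ) (ω : Ω) (k : Fin N) : ℝ≥0∞ :=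
  ⨆ j ∈ Finset.range m, fn E Vs j ω k

/-- The set of indices `m` at which the threshold stopping criterion
`Γ_{m+1}⁻¹ τ < min_{1 ≤ k ≤ N} Z^{(m)}(x_k)` holds. -/
def stopSet (E : ℕ → Ω → ℝ) (Vs : ℕ → Ω → Fin N → ℝ) (τ : ℝ) (ω : Ω) : Set ℕ :=
  {m : ℕ | ENNReal.ofReal (τ * (arrivals E (m + 1) ω)⁻¹) < ⨅ k, Zpart E Vs m ω k}

/-- The threshold stopping time `T_τ`, valued in `[0,∞]` (equal to `∞` if the
stopping criterion never holds). -/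
def T (E : ℕ → Ω → ℝ) (Vs : ℕ → Ω → Fin N → ℝ) (τ : ℝ) (ω : Ω) : ℝ≥0∞ :=
  ⨅ m ∈ stopSet E Vs τ ω, (m : ℝ≥0∞)

/-- The record-breaking times for the spectral processes: indices `n ≥ 1` with
`max_{1 ≤ i ≤ N} V_n(x_i) > n^a exp(C)`. -/
def recordSetX (Vs : ℕ → Ω → Fin N → ℝ) (a Creg : ℝ) (ω : Ω) : Set ℕ :=
  {n : ℕ | 0 < n ∧ (n : ℝ) ^ a * Real.exp Creg < ⨆ k, Vs (n - 1) ω k}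

/-- `N_X = sup{n : max_i V_n(x_i) > n^a exp(C)}` (with `sup ∅ = 0`). -/
def NX (Vs : ℕ → Ω → Fin N → ℝ) (a Creg : ℝ) (ω : Ω) : ℕ :=
  sSup (recordSetX Vs a Creg ω)

/-- The times at which the random walk `Γ_n − cn` is nonpositive. -/
def recordSetG (E : ℕ → Ω → ℝ) (c : ℝ) (ω : Ω) : Set ℕ :=
  {n : ℕ | 0 < n ∧ arrivals E n ω ≤ c * n}

/-- `N_Γ = sup{n : Γ_n ≤ cn}` (with `sup ∅ = 0`). -/
def NG (E : ℕ → Ω → ℝ) (c : ℝ) (ω : Ω) : ℕ :=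
  sSup (recordSetG E c ω)

/-- `N_a = ⌊(Γ_1 exp(C) / (c · min_{1 ≤ i ≤ N} V_1(x_i)))^{1/(1−a)}⌋`. -/
def Na (E : ℕ → Ω → ℝ) (Vs : ℕ → Ω → Fin N → ℝ) (a c Creg : ℝ) (ω : Ω) : ℕ :=
  Nat.floor ((arrivals E 1 ω * Real.exp Creg / (c * ⨅ k, Vs 0 ω k)) ^ (1 / (1 - a)))

end MaxStableSimFin

namespace MaxStableSimFin

section

variable {Ω : Type*} {N : ℕ}

lemma arrivals_one (E : ℕ → Ω → ℝ) (ω : Ω) : arrivals E 1 ω = E 0 ω := by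
  simp [arrivals]

lemma le_of_NX_lt {Vs : ℕ → Ω → Fin N → ℝ} {a Creg : ℝ} {ω : Ω}
    (hX : BddAbove (recordSetX Vs a Creg ω)) {n : ℕ} (hn : NX Vs a Creg ω < n) (k : Fin N) :
    Vs (n - 1) ω k ≤ (n : ℝ) ^ a * Real.exp Creg := by
  by_contra! h
  exact notMem_of_csSup_lt hn hX
    ⟨(Nat.zero_le _).trans_lt hn, h.trans_le (le_ciSup (Set.finite_range _).bddAbove k)⟩

lemma lt_arrivals_of_NG_lt {E : ℕ → Ω → ℝ} {c : ℝ} {ω : Ω}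
    (hG : BddAbove (recordSetG E c ω)) {n : ℕ} (hn : NG E c ω < n) :
    c * n < arrivals E n ω := by
  by_contra! h
  exact notMem_of_csSup_lt hn hG ⟨(Nat.zero_le _).trans_lt hn, h⟩

lemma lt_rpow_of_floor_rpow_one_div_lt {x p : ℝ} (hx : 0 ≤ x) (hp : 0 < p) {n : ℕ}
    (h : ⌊x ^ (1 / p)⌋₊ < n) : x < (n : ℝ) ^ p :=
  calc x = (x ^ (1 / p)) ^ p := by
          rw [← Real.rpow_mul hx, one_div_mul_cancel hp.ne', Real.rpow_one]
    _ < (n : ℝ) ^ p :=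
      Real.rpow_lt_rpow (by positivity) ((Nat.floor_lt (by positivity)).1 h) hp

/-- Here `γ`, `γ₁`, `v`, `m` stand for `Γₙ`, `Γ₁`, `Vₙ(xᵢ)` and `min_i V₁(xᵢ)`. -/
lemma inv_mul_lt_inv_mul_of_records {γ γ₁ v m a c C : ℝ} {n : ℕ} (hc : 0 < c) (hn : 0 < n)
    (hγ₁ : 0 < γ₁) (hm : 0 < m) (hv : v ≤ (n : ℝ) ^ a * Real.exp C) (hγ : c * n < γ)
    (hNa : γ₁ * Real.exp C / (c * m) < (n : ℝ) ^ (1 - a)) :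
    γ⁻¹ * v < γ₁⁻¹ * m := by
  have hn' : (0 : ℝ) < n := by exact_mod_cast hn
  have hna : (0 : ℝ) < (n : ℝ) ^ a := Real.rpow_pos_of_pos hn' a
  have hγ0 : 0 < γ := (mul_pos hc hn').trans hγ
  rw [Real.rpow_sub hn', Real.rpow_one, div_lt_div_iff₀ (by positivity) hna] at hNa
  calc γ⁻¹ * v ≤ γ⁻¹ * ((n : ℝ) ^ a * Real.exp C) := by gcongr
    _ < (c * n)⁻¹ * ((n : ℝ) ^ a * Real.exp C) := by gcongr
    _ < γ₁⁻¹ * m := by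
      rw [inv_mul_eq_div, inv_mul_eq_div, div_lt_div_iff₀ (by positivity) hγ₁]
      nlinarith

lemma biSup_range_eq_iSup_of_le_apply_zero {α : Type*} [CompleteLattice α] {f : ℕ → α}
    {M : ℕ} (hM : 0 < M) (hf : ∀ j, M ≤ j → f j ≤ f 0) :
    ⨆ j ∈ Finset.range M, f j = ⨆ j, f j := by
  refine le_antisymm (iSup₂_le fun j _ => le_iSup f j) (iSup_le fun j => ?_)
  rcases lt_or_ge j M with hj | hj
  · exact le_iSup₂ (f := fun j (_ : j ∈ Finset.range M) => f j) j (Finset.mem_range.2 hj)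
  · exact (hf j hj).trans
      (le_iSup₂ (f := fun j (_ : j ∈ Finset.range M) => f j) 0 (Finset.mem_range.2 hM))

lemma inv_arrivals_mul_lt_of_max_lt {E : ℕ → Ω → ℝ} {Vs : ℕ → Ω → Fin N → ℝ}
    {a c Creg : ℝ} {ω : Ω} (ha1 : a < 1) (hc0 : 0 < c) (hE0 : 0 < E 0 ω)
    (hm : 0 < ⨅ i, Vs 0 ω i) (hX : BddAbove (recordSetX Vs a Creg ω))
    (hG : BddAbove (recordSetG E c ω)) (n : ℕ) (k : Fin N)
    (hn : max (NX Vs a Creg ω) (max (NG E c ω) (Na E Vs a c Creg ω)) < n) :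
    (arrivals E n ω)⁻¹ * Vs (n - 1) ω k < (arrivals E 1 ω)⁻¹ * ⨅ i, Vs 0 ω i := by
  simp only [max_lt_iff] at hn
  obtain ⟨hnX, hnG, hnA⟩ := hn
  rw [Na, arrivals_one] at hnA
  rw [arrivals_one]
  refine inv_mul_lt_inv_mul_of_records hc0 ((Nat.zero_le _).trans_lt hnA) hE0 hm
    (le_of_NX_lt hX hnX k) (lt_arrivals_of_NG_lt hG hnG) ?_
  exact lt_rpow_of_floor_rpow_one_div_lt (by positivity) (by linarith) hnA

lemma Zpart_eq_Z_of_tail_lt {E : ℕ → Ω → ℝ} {Vs : ℕ → Ω → Fin N → ℝ} {ω : Ω} {M : ℕ}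
    (hM : 0 < M) (hE0 : 0 < E 0 ω)
    (htail : ∀ n k, M < n →
      (arrivals E n ω)⁻¹ * Vs (n - 1) ω k < (arrivals E 1 ω)⁻¹ * ⨅ i, Vs 0 ω i)
    (k : Fin N) : Zpart E Vs M ω k = Z E Vs ω k := by
  refine biSup_range_eq_iSup_of_le_apply_zero hM fun j hj => ENNReal.ofReal_le_ofReal ?_
  have hj' := htail (j + 1) k (Nat.lt_succ_of_le hj)
  rw [Nat.add_sub_cancel, arrivals_one] at hj'
  rw [zero_add, arrivals_one]
  exact hj'.le.trans (mul_le_mul_of_nonneg_left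
    (ciInf_le (Set.finite_range _).bddBelow k) (inv_nonneg.2 hE0.le))

end

variable {Ω : Type*} [MeasurableSpace Ω] {N : ℕ}

lemma expMeasure_Iic_zero {r : ℝ} (hr : 0 < r) : expMeasure r (Set.Iic 0) = 0 := by
  have := isProbabilityMeasure_expMeasure hr
  have hcdf := cdf_expMeasure_eq hr 0
  rw [cdf_eq_real] at hcdf
  simpa [measureReal_eq_zero_iff] using hcdf

lemma ae_pos_of_map_eq_expMeasure {μ : Measure Ω} {X : Ω → ℝ} {r : ℝ} (hr : 0 < r)
    (hX : Measurable X) (hmap : μ.map X = expMeasure r) : ∀ᵐ ω ∂μ, 0 < X ω := by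
  have hpos : ∀ᵐ y ∂μ.map X, 0 < y := by
    rw [ae_iff, hmap]
    simp only [not_lt]
    exact expMeasure_Iic_zero hr
  exact ae_of_ae_map hX.aemeasurable hpos

theorem record_breakers_exact_general
    (μ : Measure Ω)
    (E : ℕ → Ω → ℝ) (hEmeas : ∀ j, Measurable (E j))
    (hEexp : ∀ j, Measure.map (E j) μ = expMeasure 1)
    (V0 : Ω → Fin N → ℝ)
    (Vs : ℕ → Ω → Fin N → ℝ)
    (hVcopies : ∀ j, IdentDistrib (Vs j) V0 μ μ)
    (a c Creg : ℝ) (ha1 : a < 1) (hc0 : 0 < c)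
    (hVpos : ∀ᵐ ω ∂μ, 0 < ⨅ k, V0 ω k)
    (hNXfin : ∀ᵐ ω ∂μ, BddAbove (recordSetX Vs a Creg ω))
    (hNGfin : ∀ᵐ ω ∂μ, BddAbove (recordSetG E c ω)) :
    ∀ᵐ ω ∂μ,
      (∀ (n : ℕ) (k : Fin N),
          max (NX Vs a Creg ω) (max (NG E c ω) (Na E Vs a c Creg ω)) < n →
          (arrivals E n ω)⁻¹ * Vs (n - 1) ω k <
            (arrivals E 1 ω)⁻¹ * ⨅ i, Vs 0 ω i) ∧
        ∀ k : Fin N,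
          Zpart E Vs (max (max (NX Vs a Creg ω) (NG E c ω)) (max (Na E Vs a c Creg ω) 1)) ω k =
            Z E Vs ω k := by
  have hE0 := ae_pos_of_map_eq_expMeasure one_pos (hEmeas 0) (hEexp 0)
  have hm : ∀ᵐ ω ∂μ, 0 < ⨅ k, Vs 0 ω k :=
    (hVcopies 0).symm.ae_snd (measurableSet_lt measurable_const
      (Measurable.iInf fun k => measurable_pi_apply k)) hVpos
  filter_upwards [hE0, hm, hNXfin, hNGfin] with ω hE0 hm hX hG
  have htail := inv_arrivals_mul_lt_of_max_lt ha1 hc0 hE0 hm hX hG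
  exact ⟨htail, Zpart_eq_Z_of_tail_lt (by omega) hE0 fun n k hn => htail n k (by omega)⟩

/-- Record breakers (Liu–Blanchet–Dieker–Mikosch): if
`min_{1 ≤ i ≤ N} V(x_i) > 0` almost surely and `N_X`, `N_Γ` are almost surely finite,
then almost surely every `n > max{N_X, N_Γ, N_a}` satisfies
`Γ_n⁻¹ V_n(x_i) < Γ_1⁻¹ min_{1 ≤ i' ≤ N} V_1(x_{i'})` for all `i`; consequently, with
`M = max{N_X, N_Γ, N_a, 1}`, almost surely `Z^{(M)}(x_i) = Z(x_i)` for all `i`. -/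
theorem record_breakers_exact
    (μ : Measure Ω) [IsProbabilityMeasure μ] [NeZero N]
    (E : ℕ → Ω → ℝ) (hEmeas : ∀ j, Measurable (E j))
    (hEindep : iIndepFun E μ)
    (hEexp : ∀ j, Measure.map (E j) μ = expMeasure 1)
    (V0 : Ω → Fin N → ℝ) (hV0meas : Measurable V0)
    (hV0nn : ∀ ω k, 0 ≤ V0 ω k)
    (hV0mean : ∀ k, ∫⁻ ω, ENNReal.ofReal (V0 ω k) ∂μ = 1)
    (Vs : ℕ → Ω → Fin N → ℝ) (hVmeas : ∀ j, Measurable (Vs j))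
    (hVindep : iIndepFun Vs μ)
    (hVcopies : ∀ j, IdentDistrib (Vs j) V0 μ μ)
    (hVnn : ∀ j ω k, 0 ≤ Vs j ω k)
    (hEV : IndepFun (fun ω j => E j ω) (fun ω j => Vs j ω) μ)
    (hZfin : ∀ᵐ ω ∂μ, ∀ k, Z E Vs ω k < ⊤)
    (a c Creg : ℝ) (ha0 : 0 < a) (ha1 : a < 1) (hc0 : 0 < c) (hc1 : c < 1) (hC : 0 < Creg)
    (hVpos : ∀ᵐ ω ∂μ, 0 < ⨅ k, V0 ω k)
    (hNXfin : ∀ᵐ ω ∂μ, BddAbove (recordSetX Vs a Creg ω))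
    (hNGfin : ∀ᵐ ω ∂μ, BddAbove (recordSetG E c ω)) :
    ∀ᵐ ω ∂μ,
      (∀ (n : ℕ) (k : Fin N),
          max (NX Vs a Creg ω) (max (NG E c ω) (Na E Vs a c Creg ω)) < n →
          (arrivals E n ω)⁻¹ * Vs (n - 1) ω k <
            (arrivals E 1 ω)⁻¹ * ⨅ i, Vs 0 ω i) ∧
        ∀ k : Fin N,
          Zpart E Vs (max (max (NX Vs a Creg ω) (NG E c ω)) (max (Na E Vs a c Creg ω) 1)) ω k =
            Z E Vs ω k :=
  record_breakers_exact_general μ E hEmeas hEexp V0 Vs hVcopies a c Creg ha1 hc0 hVpos hNXfin hNGfin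

end MaxStableSimFin
end
end

section
/- For each k ∈ {1,…,N}, the set function P_k(A) = E[ V(x_k) · 1{ V(x_k)^{-1}·(V(x_1),…,V(x_N)) ∈ A } ] defines a probability measure on [0,∞)^N under which the k-th coordinate equals 1 almost surely. Moreover, if Y is a random vector with law (1/N) Σ_{k=1}^N P_k and V' = N·Y / (Σ_{k=1}^N Y_k), then Σ_{k=1}^N V'_k = N almost surely (sum-normalization) and V' is a spectral vector for the same max-stable law: for every z ∈ (0,∞)^N, E[ max_{1≤k≤N} V'_k / z_k ] = E[ max_{1≤k≤N} V(x_k) / z_k ]. -/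
/-!
Under `P_k` the integral of a functional `f` of the direction of a vector is
`E[V(x_k) f(V)]`, since `f` does not see the factor `V(x_k)⁻¹`; and `P_k`-almost surely
the `k`-th coordinate is `1`, so the coordinate sum is nonzero. The vector `N Y / Σ Y`
depends on `Y` only through its direction, so averaging over `k` gives
`E[(Σ_k V(x_k)) · max_k (N V(x_k) / Σ_i V(x_i)) / z_k] / N`, in which the factor
`Σ_k V(x_k)` cancels the normalization.
-/

open MeasureTheory ProbabilityTheory
open scoped ENNReal

noncomputable section

namespace SumNormalize

variable {Ω : Type*} [MeasurableSpace Ω] {N : ℕ}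

/-- The measure `P_k(A) = E[V(x_k) · 1{V(x_k)⁻¹ · (V(x_1), …, V(x_N)) ∈ A}]` on
`[0,∞)^K`, realized as the pushforward of the `V(x_k)`-tilted measure under the
normalization map (the indicator is `0` on the event `{V(x_k) = 0}`, where the
density vanishes). -/
def Pk (μ : Measure Ω) (V0 : Ω → Fin N → ℝ) (k : Fin N) : Measure (Fin N → ℝ) :=
  (μ.withDensity fun ω => ENNReal.ofReal (V0 ω k)).map fun ω i => (V0 ω k)⁻¹ * V0 ω i

def sumNormalize (v : Fin N → ℝ) : Fin N → ℝ := fun k => (N : ℝ) * v k / ∑ k', v k'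

theorem sumNormalize_smul {c : ℝ} (hc : c ≠ 0) (v : Fin N → ℝ) :
    sumNormalize (c • v) = sumNormalize v := by
  ext k
  simp only [sumNormalize, Pi.smul_apply, smul_eq_mul, ← Finset.mul_sum]
  rw [mul_left_comm, mul_div_mul_left _ _ hc]

theorem sum_sumNormalize {v : Fin N → ℝ} (hv : ∑ k, v k ≠ 0) :
    ∑ k, sumNormalize v k = N := by
  simp only [sumNormalize, ← Finset.sum_div, ← Finset.mul_sum, mul_div_assoc, div_self hv,
    mul_one]

theorem measurable_sumNormalize : Measurable (sumNormalize (N := N)) :=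
  measurable_pi_lambda _ fun k => (measurable_const.mul (measurable_pi_apply k)).div
    (Finset.measurable_sum _ fun i _ => measurable_pi_apply i)

theorem ofReal_sum_mul_iSup_sumNormalize {v : Fin N → ℝ} (hv : ∀ k, 0 ≤ v k)
    (z : Fin N → ℝ) :
    ENNReal.ofReal (∑ k, v k) * ⨆ k, ENNReal.ofReal (sumNormalize v k / z k) =
      N * ⨆ k, ENNReal.ofReal (v k / z k) := by
  have hS : 0 ≤ ∑ k, v k := Finset.sum_nonneg fun k _ => hv k
  rcases hS.eq_or_lt with hS0 | hSpos
  · have hzero : ∀ k, v k = 0 := fun k =>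
      (Finset.sum_eq_zero_iff_of_nonneg fun k _ => hv k).1 hS0.symm k (Finset.mem_univ k)
    simp [hzero]
  rw [ENNReal.mul_iSup, ENNReal.mul_iSup]
  refine iSup_congr fun k => ?_
  rw [← ENNReal.ofReal_natCast, ← ENNReal.ofReal_mul hS, ← ENNReal.ofReal_mul (Nat.cast_nonneg N)]
  congr 1
  simp only [sumNormalize]
  field_simp

variable {μ : Measure Ω} {V : Ω → Fin N → ℝ}

theorem measurable_inv_eval_mul (hV : Measurable V) (k : Fin N) :
    Measurable fun ω i => (V ω k)⁻¹ * V ω i :=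
  measurable_pi_lambda _ fun _ => hV.eval.inv.mul hV.eval

theorem isProbabilityMeasure_Pk (hV : Measurable V)
    (hmean : ∀ k, ∫⁻ ω, ENNReal.ofReal (V ω k) ∂μ = 1) (k : Fin N) :
    IsProbabilityMeasure (Pk μ V k) := by
  have : IsProbabilityMeasure (μ.withDensity fun ω => ENNReal.ofReal (V ω k)) :=
    ⟨by rw [withDensity_apply _ MeasurableSet.univ, Measure.restrict_univ, hmean k]⟩
  exact Measure.isProbabilityMeasure_map (measurable_inv_eval_mul hV k).aemeasurable

theorem ae_Pk_of_forall {p : (Fin N → ℝ) → Prop} (hV : Measurable V)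
    (hp : MeasurableSet {v | p v}) (k : Fin N) (h : ∀ ω, 0 < V ω k → p ((V ω k)⁻¹ • V ω)) :
    ∀ᵐ v ∂Pk μ V k, p v := by
  rw [Pk, ae_map_iff (measurable_inv_eval_mul hV k).aemeasurable hp,
    ae_withDensity_iff (f := fun ω => ENNReal.ofReal (V ω k)) (by fun_prop)]
  exact Filter.Eventually.of_forall fun ω hω => h ω (ENNReal.ofReal_pos.1 (pos_iff_ne_zero.2 hω))

theorem Pk_apply_eval_eq_one (hV : Measurable V)
    (hmean : ∀ k, ∫⁻ ω, ENNReal.ofReal (V ω k) ∂μ = 1) (k : Fin N) :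
    Pk μ V k {v | v k = 1} = 1 := by
  have := isProbabilityMeasure_Pk hV hmean k
  have hs : MeasurableSet {v : Fin N → ℝ | v k = 1} :=
    measurableSet_eq_fun (by fun_prop) (by fun_prop)
  rw [← measure_univ (μ := Pk μ V k), ← ae_iff_measure_eq hs.nullMeasurableSet]
  exact ae_Pk_of_forall hV hs k fun ω hω => inv_mul_cancel₀ hω.ne'

theorem ae_Pk_sum_ne_zero (hV : Measurable V) (hnn : ∀ ω k, 0 ≤ V ω k) (k : Fin N) :
    ∀ᵐ v ∂Pk μ V k, ∑ i, v i ≠ 0 := by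
  refine ae_Pk_of_forall hV ((measurableSet_singleton 0).compl.preimage (by fun_prop)) k
    fun ω hω => (Finset.sum_pos' (fun i _ => ?_) ⟨k, Finset.mem_univ k, ?_⟩).ne'
  · exact mul_nonneg (inv_nonneg.2 hω.le) (hnn ω i)
  · simp [hω.ne']

theorem lintegral_Pk {f : (Fin N → ℝ) → ℝ≥0∞} (hV : Measurable V) (hf : Measurable f)
    (hf_smul : ∀ c : ℝ, 0 < c → ∀ v, f (c • v) = f v) (k : Fin N) :
    ∫⁻ v, f v ∂Pk μ V k = ∫⁻ ω, ENNReal.ofReal (V ω k) * f (V ω) ∂μ := by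
  rw [Pk, lintegral_map hf (measurable_inv_eval_mul hV k),
    lintegral_withDensity_eq_lintegral_mul μ (by fun_prop)
      (g := fun ω => f fun i => (V ω k)⁻¹ * V ω i) (hf.comp (measurable_inv_eval_mul hV k))]
  refine lintegral_congr fun ω => ?_
  rcases le_or_gt (V ω k) 0 with hle | hpos
  · simp [ENNReal.ofReal_of_nonpos hle]
  · exact congrArg (_ * ·) (hf_smul _ (inv_pos.2 hpos) (V ω))

theorem lintegral_sum_Pk {f : (Fin N → ℝ) → ℝ≥0∞} (hV : Measurable V)
    (hnn : ∀ ω k, 0 ≤ V ω k) (hf : Measurable f)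
    (hf_smul : ∀ c : ℝ, 0 < c → ∀ v, f (c • v) = f v) :
    ∫⁻ v, f v ∂(∑ k, Pk μ V k) = ∫⁻ ω, ENNReal.ofReal (∑ k, V ω k) * f (V ω) ∂μ := by
  simp_rw [lintegral_finsetSum_measure, lintegral_Pk hV hf hf_smul,
    ENNReal.ofReal_sum_of_nonneg fun k _ => hnn _ k, Finset.sum_mul]
  exact (lintegral_finsetSum _ fun k _ =>
    (ENNReal.measurable_ofReal.comp hV.eval).mul (hf.comp hV)).symm

theorem sum_normalized_spectral_process_general
    (μ : Measure Ω) [NeZero N]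
    {Ω' : Type*} [MeasurableSpace Ω'] (μ' : Measure Ω')
    (V0 : Ω → Fin N → ℝ) (hV0meas : Measurable V0)
    (hV0nn : ∀ ω k, 0 ≤ V0 ω k)
    (hV0mean : ∀ k, ∫⁻ ω, ENNReal.ofReal (V0 ω k) ∂μ = 1)
    (Y : Ω' → Fin N → ℝ) (hYmeas : Measurable Y)
    (hYlaw : Measure.map Y μ' = (N : ℝ≥0∞)⁻¹ • ∑ k : Fin N, Pk μ V0 k) :
    (∀ k, IsProbabilityMeasure (Pk μ V0 k)) ∧
      (∀ k : Fin N, Pk μ V0 k {v | v k = 1} = 1) ∧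
      (∀ᵐ ω' ∂μ', ∑ k, (N : ℝ) * Y ω' k / (∑ k', Y ω' k') = (N : ℝ)) ∧
      ∀ z : Fin N → ℝ, (∀ k, 0 < z k) →
        ∫⁻ ω', ⨆ k, ENNReal.ofReal (((N : ℝ) * Y ω' k / (∑ k', Y ω' k')) / z k) ∂μ' =
          ∫⁻ ω, ⨆ k, ENNReal.ofReal (V0 ω k / z k) ∂μ := by
  have hsum : ∀ᵐ v ∂Measure.map Y μ', ∑ k, v k ≠ 0 := by
    rw [hYlaw]
    exact Measure.ae_smul_measure (ae_finsetSum_measure_iff.2 fun k _ =>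
      ae_Pk_sum_ne_zero hV0meas hV0nn k) _
  refine ⟨isProbabilityMeasure_Pk hV0meas hV0mean, Pk_apply_eval_eq_one hV0meas hV0mean,
    ?_, fun z _ => ?_⟩
  · filter_upwards [ae_of_ae_map hYmeas.aemeasurable hsum] with ω' h using sum_sumNormalize h
  set g : (Fin N → ℝ) → ℝ≥0∞ := fun v => ⨆ k, ENNReal.ofReal (sumNormalize v k / z k)
  have hg : Measurable g := Measurable.iSup fun k => ENNReal.measurable_ofReal.comp
    ((measurable_sumNormalize.eval).div_const _)
  have hg_smul : ∀ c : ℝ, 0 < c → ∀ v, g (c • v) = g v := fun c hc v => by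
    simp only [g, sumNormalize_smul hc.ne']
  calc ∫⁻ ω', g (Y ω') ∂μ' = ∫⁻ v, g v ∂Measure.map Y μ' := (lintegral_map hg hYmeas).symm
    _ = (N : ℝ≥0∞)⁻¹ * ∫⁻ ω, ENNReal.ofReal (∑ k, V0 ω k) * g (V0 ω) ∂μ := by
      rw [hYlaw, lintegral_smul_measure, lintegral_sum_Pk hV0meas hV0nn hg hg_smul, smul_eq_mul]
    _ = (N : ℝ≥0∞)⁻¹ * ∫⁻ ω, N * ⨆ k, ENNReal.ofReal (V0 ω k / z k) ∂μ := by
      simp only [g, ofReal_sum_mul_iSup_sumNormalize (hV0nn _)]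
    _ = ∫⁻ ω, ⨆ k, ENNReal.ofReal (V0 ω k / z k) ∂μ := by
      rw [lintegral_const_mul' _ _ (ENNReal.natCast_ne_top N), ← mul_assoc,
        ENNReal.inv_mul_cancel (Nat.cast_ne_zero.2 (NeZero.ne N)) (ENNReal.natCast_ne_top N),
        one_mul]

/-- For each `k`, `P_k` is a probability measure under which the
`k`-th coordinate equals `1` almost surely. Moreover, if `Y` has law
`(1/N) Σ_{k=1}^N P_k` and `V' = N·Y / (Σ_k Y_k)`, then `Σ_k V'_k = N` almost surely
(sum-normalization) and `V'` is a spectral vector for the same max-stable law: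
`E[max_k V'_k / z_k] = E[max_k V(x_k) / z_k]` for every `z ∈ (0,∞)^N`. -/
theorem sum_normalized_spectral_process
    (μ : Measure Ω) [IsProbabilityMeasure μ] [NeZero N]
    {Ω' : Type*} [MeasurableSpace Ω'] (μ' : Measure Ω') [IsProbabilityMeasure μ']
    (V0 : Ω → Fin N → ℝ) (hV0meas : Measurable V0)
    (hV0nn : ∀ ω k, 0 ≤ V0 ω k)
    (hV0mean : ∀ k, ∫⁻ ω, ENNReal.ofReal (V0 ω k) ∂μ = 1)
    (Y : Ω' → Fin N → ℝ) (hYmeas : Measurable Y)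
    (hYlaw : Measure.map Y μ' = (N : ℝ≥0∞)⁻¹ • ∑ k : Fin N, Pk μ V0 k) :
    (∀ k, IsProbabilityMeasure (Pk μ V0 k)) ∧
      (∀ k : Fin N, Pk μ V0 k {v | v k = 1} = 1) ∧
      (∀ᵐ ω' ∂μ', ∑ k, (N : ℝ) * Y ω' k / (∑ k', Y ω' k') = (N : ℝ)) ∧
      ∀ z : Fin N → ℝ, (∀ k, 0 < z k) →
        ∫⁻ ω', ⨆ k, ENNReal.ofReal (((N : ℝ) * Y ω' k / (∑ k', Y ω' k')) / z k) ∂μ' =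
          ∫⁻ ω, ⨆ k, ENNReal.ofReal (V0 ω k / z k) ∂μ :=
  sum_normalized_spectral_process_general μ μ' V0 hV0meas hV0nn hV0mean Y hYmeas hYlaw

end SumNormalize
end
end

section
/- Assume θ = E[ sup_{x∈K} V(x) ] ∈ (0,∞). Then A ↦ θ^{-1} E[ (sup_{x∈K} V(x)) · 1{V ∈ A} ] defines a probability measure on C(K); if Y is a random element of C(K) with this law, then sup_{x∈K} Y(x) > 0 almost surely, and the sup-normalized process V^∞ = θ · Y / sup_{x∈K} Y satisfies: (i) sup_{x∈K} V^∞(x) = θ almost surely; (ii) E[V^∞(x)] = 1 for all x ∈ K; and (iii) for every finite subset {y_1,…,y_m} ⊆ K and every z ∈ (0,∞)^m, E[ max_{1≤i≤m} V^∞(y_i)/z_i ] = E[ max_{1≤i≤m} V(y_i)/z_i ], so V^∞ is a spectral process for the same max-stable process. -/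
open MeasureTheory ProbabilityTheory
open scoped ENNReal

/-!
Write `s(f) = sup_x f(x)`. If `Y` has the law `A ↦ θ⁻¹ E[s(V) 1{V ∈ A}]`, then for every
functional `G ≥ 0` on `C(K)` that is positively homogeneous of degree one,
`E[G(θ Y / s(Y))] = θ⁻¹ E[s(V) G(θ V / s(V))] = θ⁻¹ E[θ G(V)] = E[G(V)]`:
the tilt by `s(V)` cancels the normalization exactly. Both `f ↦ f(x)` and
`f ↦ max_i f(y_i) / z_i` are such functionals. The tilted law puts no mass on `{s = 0}`,
so `s(Y) > 0` almost surely, and then `sup_x θ Y(x) / s(Y) = θ`.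
-/

noncomputable section

namespace SupNormalize

variable {Ω : Type*} [MeasurableSpace Ω]
variable {K : Type*} [MetricSpace K] [CompactSpace K] [Nonempty K]
variable [MeasurableSpace C(K, ℝ)]

/-- The probability measure `A ↦ θ⁻¹ E[(sup_{x ∈ K} V(x)) · 1{V ∈ A}]` on `C(K)`,
realized as the pushforward of the `sup V`-tilted measure under `V`. -/
def supTilt (μ : Measure Ω) (V0 : Ω → C(K, ℝ)) (θ : ℝ) : Measure C(K, ℝ) :=
  (ENNReal.ofReal θ)⁻¹ • (μ.withDensity fun ω => ⨆ x, ENNReal.ofReal (V0 ω x)).map V0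

theorem continuous_iSup_of_compactSpace {γ X α : Type*} [TopologicalSpace γ] [TopologicalSpace X]
    [CompactSpace X] [ConditionallyCompleteLinearOrder α] [TopologicalSpace α] [OrderTopology α]
    {g : γ → X → α} (hg : Continuous ↿g) : Continuous fun c => ⨆ x, g c x := by
  simpa only [Set.image_univ, sSup_range] using isCompact_univ.continuous_sSup hg

section SupNormalization

variable {X : Type*} [TopologicalSpace X]

theorem continuous_iSup_apply [CompactSpace X] : Continuous fun f : C(X, ℝ) => ⨆ x, f x :=
  continuous_iSup_of_compactSpace continuous_eval

theorem continuous_iSup_ofReal_apply [CompactSpace X] :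
    Continuous fun f : C(X, ℝ) => ⨆ x, ENNReal.ofReal (f x) :=
  continuous_iSup_of_compactSpace (ENNReal.continuous_ofReal.comp continuous_eval)

theorem iSup_ofReal_apply [CompactSpace X] [Nonempty X] (f : C(X, ℝ)) :
    ⨆ x, ENNReal.ofReal (f x) = ENNReal.ofReal (⨆ x, f x) :=
  (Monotone.map_ciSup_of_continuousAt ENNReal.continuous_ofReal.continuousAt
    ENNReal.ofReal_mono (isCompact_range f.continuous).bddAbove).symm

/-- `V^∞ = θ · f / sup f`; for `sup f = 0` this is the zero function. -/
def supNormalize (θ : ℝ) (f : C(X, ℝ)) : C(X, ℝ) := (θ / ⨆ x, f x) • f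

@[simp]
theorem supNormalize_apply (θ : ℝ) (f : C(X, ℝ)) (x : X) :
    supNormalize θ f x = θ * f x / ⨆ x', f x' := by
  simp only [supNormalize, ContinuousMap.smul_apply, smul_eq_mul]
  ring

theorem iSup_supNormalize {θ : ℝ} (hθ : 0 ≤ θ) {f : C(X, ℝ)} (hf : 0 < ⨆ x, f x) :
    ⨆ x, supNormalize θ f x = θ := by
  simp only [supNormalize, ContinuousMap.smul_apply, smul_eq_mul]
  rw [← Real.mul_iSup_of_nonneg (div_nonneg hθ hf.le), div_mul_cancel₀ θ hf.ne']

theorem measurable_supNormalize [CompactSpace X] [MeasurableSpace C(X, ℝ)] [BorelSpace C(X, ℝ)]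
    [SecondCountableTopology C(X, ℝ)] (θ : ℝ) : Measurable (supNormalize (X := X) θ) :=
  (measurable_const.div continuous_iSup_apply.measurable).smul measurable_id

def PosHomogeneous (G : C(X, ℝ) → ℝ≥0∞) : Prop :=
  ∀ c : ℝ, 0 ≤ c → ∀ f, G (c • f) = ENNReal.ofReal c * G f

theorem posHomogeneous_iSup_ofReal_div {ι : Type*} (y : ι → X) (z : ι → ℝ) :
    PosHomogeneous fun f : C(X, ℝ) => ⨆ i, ENNReal.ofReal (f (y i) / z i) := by
  intro c hc f
  simp only [ContinuousMap.smul_apply, smul_eq_mul, mul_div_assoc, ENNReal.ofReal_mul hc,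
    ENNReal.mul_iSup]

theorem posHomogeneous_ofReal_apply (x : X) :
    PosHomogeneous fun f : C(X, ℝ) => ENNReal.ofReal (f x) := by
  simpa using posHomogeneous_iSup_ofReal_div (fun _ : Unit => x) 1

theorem ofReal_iSup_mul_supNormalize [CompactSpace X] {G : C(X, ℝ) → ℝ≥0∞}
    (hG : PosHomogeneous G) {θ : ℝ} (hθ : 0 ≤ θ) {f : C(X, ℝ)} (hf : ∀ x, 0 ≤ f x) :
    ENNReal.ofReal (⨆ x, f x) * G (supNormalize θ f) = ENNReal.ofReal θ * G f := by
  rcases (Real.iSup_nonneg hf).eq_or_lt with hs | hs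
  · have hf0 : f = (0 : ℝ) • f := by
      ext x
      have hfx : f x ≤ 0 := (le_ciSup (isCompact_range f.continuous).bddAbove x).trans hs.ge
      simpa using le_antisymm hfx (hf x)
    rw [← hs, ENNReal.ofReal_zero, zero_mul, hf0, hG 0 le_rfl, ENNReal.ofReal_zero, zero_mul,
      mul_zero]
  · rw [supNormalize, hG _ (div_nonneg hθ hs.le), ← mul_assoc, ← ENNReal.ofReal_mul hs.le,
      mul_div_cancel₀ θ hs.ne']

end SupNormalization

theorem isProbabilityMeasure_smul_map_withDensity {E : Type*} [MeasurableSpace E]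
    {μ : Measure Ω} {V : Ω → E} (hV : Measurable V) {d : Ω → ℝ≥0∞}
    (h0 : ∫⁻ ω, d ω ∂μ ≠ 0) (htop : ∫⁻ ω, d ω ∂μ ≠ ∞) :
    IsProbabilityMeasure ((∫⁻ ω, d ω ∂μ)⁻¹ • (μ.withDensity d).map V) := by
  constructor
  rw [Measure.smul_apply, Measure.map_apply hV MeasurableSet.univ, Set.preimage_univ,
    withDensity_apply _ MeasurableSet.univ, Measure.restrict_univ, smul_eq_mul,
    ENNReal.inv_mul_cancel h0 htop]

section SupTilt

variable {μ : Measure Ω} {V0 : Ω → C(K, ℝ)} {θ : ℝ}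

theorem lintegral_supTilt [BorelSpace C(K, ℝ)] (hV0 : Measurable V0) {F : C(K, ℝ) → ℝ≥0∞}
    (hF : Measurable F) :
    ∫⁻ f, F f ∂supTilt μ V0 θ =
      (ENNReal.ofReal θ)⁻¹ * ∫⁻ ω, ENNReal.ofReal (⨆ x, V0 ω x) * F (V0 ω) ∂μ := by
  have hd : Measurable fun ω => ⨆ x, ENNReal.ofReal (V0 ω x) :=
    continuous_iSup_ofReal_apply.measurable.comp hV0
  rw [supTilt, lintegral_smul_measure, lintegral_map hF hV0, smul_eq_mul,
    lintegral_withDensity_eq_lintegral_mul _ hd (g := fun ω => F (V0 ω)) (hF.comp hV0)]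
  simp only [Pi.mul_apply, iSup_ofReal_apply]

theorem ae_supTilt_iSup_pos [BorelSpace C(K, ℝ)] (hV0 : Measurable V0) :
    ∀ᵐ f ∂supTilt μ V0 θ, 0 < ⨆ x, f x := by
  refine Measure.ae_smul_measure ((ae_map_iff hV0.aemeasurable
    (measurableSet_lt measurable_const continuous_iSup_apply.measurable)).2 ?_) _
  refine (ae_withDensity_iff (f := fun ω => ⨆ x, ENNReal.ofReal (V0 ω x))
    (continuous_iSup_ofReal_apply.measurable.comp hV0)).2
    (ae_of_all _ fun ω hω => ?_)
  rwa [iSup_ofReal_apply, ← pos_iff_ne_zero, ENNReal.ofReal_pos] at hω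

theorem lintegral_supTilt_supNormalize [BorelSpace C(K, ℝ)] (hV0 : Measurable V0)
    (hV0nn : ∀ ω x, 0 ≤ V0 ω x) (hθpos : 0 < θ) {G : C(K, ℝ) → ℝ≥0∞} (hGm : Measurable G)
    (hG : PosHomogeneous G) :
    ∫⁻ f, G (supNormalize θ f) ∂supTilt μ V0 θ = ∫⁻ ω, G (V0 ω) ∂μ := by
  calc ∫⁻ f, G (supNormalize θ f) ∂supTilt μ V0 θ
      = (ENNReal.ofReal θ)⁻¹ * ∫⁻ ω, ENNReal.ofReal θ * G (V0 ω) ∂μ := by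
        rw [lintegral_supTilt hV0 (F := fun f => G (supNormalize θ f))
          (hGm.comp (measurable_supNormalize θ))]
        congr 1
        exact lintegral_congr fun ω => ofReal_iSup_mul_supNormalize hG hθpos.le (hV0nn ω)
    _ = ∫⁻ ω, G (V0 ω) ∂μ := by
        rw [lintegral_const_mul' _ _ ENNReal.ofReal_ne_top, ← mul_assoc,
          ENNReal.inv_mul_cancel (ENNReal.ofReal_pos.2 hθpos).ne' ENNReal.ofReal_ne_top, one_mul]

end SupTilt

theorem sup_normalized_spectral_process_general
    (μ : Measure Ω) [BorelSpace C(K, ℝ)]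
    {Ω' : Type*} [MeasurableSpace Ω'] (μ' : Measure Ω')
    (V0 : Ω → C(K, ℝ)) (hV0meas : Measurable V0)
    (hV0nn : ∀ ω x, 0 ≤ V0 ω x)
    (hV0mean : ∀ x, ∫⁻ ω, ENNReal.ofReal (V0 ω x) ∂μ = 1)
    (θ : ℝ) (hθpos : 0 < θ)
    (hθ : ∫⁻ ω, ⨆ x, ENNReal.ofReal (V0 ω x) ∂μ = ENNReal.ofReal θ)
    (Y : Ω' → C(K, ℝ)) (hYmeas : Measurable Y)
    (hYlaw : Measure.map Y μ' = supTilt μ V0 θ) :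
    IsProbabilityMeasure (supTilt μ V0 θ) ∧
      (∀ᵐ ω' ∂μ', 0 < ⨆ x, Y ω' x) ∧
      (∀ᵐ ω' ∂μ', (⨆ x, θ * Y ω' x / ⨆ x', Y ω' x') = θ) ∧
      (∀ x, ∫⁻ ω', ENNReal.ofReal (θ * Y ω' x / ⨆ x', Y ω' x') ∂μ' = 1) ∧
      ∀ (m : ℕ) (y : Fin m → K) (z : Fin m → ℝ), (∀ i, 0 < z i) →
        ∫⁻ ω', ⨆ i, ENNReal.ofReal ((θ * Y ω' (y i) / ⨆ x', Y ω' x') / z i) ∂μ' =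
          ∫⁻ ω, ⨆ i, ENNReal.ofReal (V0 ω (y i) / z i) ∂μ := by
  have hY : ∀ G : C(K, ℝ) → ℝ≥0∞, Measurable G → PosHomogeneous G →
      ∫⁻ ω', G (supNormalize θ (Y ω')) ∂μ' = ∫⁻ ω, G (V0 ω) ∂μ := fun G hGm hG => by
    rw [← lintegral_map (f := fun f => G (supNormalize θ f))
      (hGm.comp (measurable_supNormalize θ)) hYmeas, hYlaw]
    exact lintegral_supTilt_supNormalize hV0meas hV0nn hθpos hGm hG
  have hpos : ∀ᵐ ω' ∂μ', 0 < ⨆ x, Y ω' x :=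
    ae_of_ae_map hYmeas.aemeasurable (hYlaw ▸ ae_supTilt_iSup_pos hV0meas)
  refine ⟨?_, hpos, ?_, fun x => ?_, fun m y z _ => ?_⟩
  · rw [supTilt, ← hθ]
    exact isProbabilityMeasure_smul_map_withDensity hV0meas
      (hθ ▸ (ENNReal.ofReal_pos.2 hθpos).ne') (hθ ▸ ENNReal.ofReal_ne_top)
  · filter_upwards [hpos] with ω' hω'
    simpa using iSup_supNormalize hθpos.le hω'
  · simpa [hV0mean x] using
      hY _ (ENNReal.measurable_ofReal.comp (continuous_eval_const x).measurable)
        (posHomogeneous_ofReal_apply x)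
  · simpa using hY _ (Measurable.iSup fun i => ENNReal.measurable_ofReal.comp
        ((continuous_eval_const (y i)).measurable.div_const (z i)))
      (posHomogeneous_iSup_ofReal_div y z)

/-- Assume `θ = E[sup_{x ∈ K} V(x)] ∈ (0,∞)`. Then
`A ↦ θ⁻¹ E[(sup_x V(x)) · 1{V ∈ A}]` is a probability measure on `C(K)`; if `Y` has
this law then `sup_{x ∈ K} Y(x) > 0` almost surely, and the sup-normalized process
`V^∞ = θ · Y / sup_{x ∈ K} Y` satisfies (i) `sup_x V^∞(x) = θ` almost surely,
(ii) `E[V^∞(x)] = 1` for all `x`, and (iii) for all `y_1, …, y_m ∈ K` and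
`z ∈ (0,∞)^m`, `E[max_i V^∞(y_i)/z_i] = E[max_i V(y_i)/z_i]`, so `V^∞` is a spectral
process for the same max-stable process. -/
theorem sup_normalized_spectral_process
    (μ : Measure Ω) [IsProbabilityMeasure μ] [BorelSpace C(K, ℝ)]
    {Ω' : Type*} [MeasurableSpace Ω'] (μ' : Measure Ω') [IsProbabilityMeasure μ']
    (V0 : Ω → C(K, ℝ)) (hV0meas : Measurable V0)
    (hV0nn : ∀ ω x, 0 ≤ V0 ω x)
    (hV0mean : ∀ x, ∫⁻ ω, ENNReal.ofReal (V0 ω x) ∂μ = 1)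
    (θ : ℝ) (hθpos : 0 < θ)
    (hθ : ∫⁻ ω, ⨆ x, ENNReal.ofReal (V0 ω x) ∂μ = ENNReal.ofReal θ)
    (Y : Ω' → C(K, ℝ)) (hYmeas : Measurable Y)
    (hYlaw : Measure.map Y μ' = supTilt μ V0 θ) :
    IsProbabilityMeasure (supTilt μ V0 θ) ∧
      (∀ᵐ ω' ∂μ', 0 < ⨆ x, Y ω' x) ∧
      (∀ᵐ ω' ∂μ', (⨆ x, θ * Y ω' x / ⨆ x', Y ω' x') = θ) ∧
      (∀ x, ∫⁻ ω', ENNReal.ofReal (θ * Y ω' x / ⨆ x', Y ω' x') ∂μ' = 1) ∧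
      ∀ (m : ℕ) (y : Fin m → K) (z : Fin m → ℝ), (∀ i, 0 < z i) →
        ∫⁻ ω', ⨆ i, ENNReal.ofReal ((θ * Y ω' (y i) / ⨆ x', Y ω' x') / z i) ∂μ' =
          ∫⁻ ω, ⨆ i, ENNReal.ofReal (V0 ω (y i) / z i) ∂μ :=
  sup_normalized_spectral_process_general μ μ' V0 hV0meas hV0nn hV0mean θ hθpos hθ Y hYmeas hYlaw

end SupNormalize
end
end
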